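/- arXiv:1301.6325 — 7 statements merged into one kernel-verified Lean document; each statement's English description precedes it below -/
import Mathlib

section
/- Let f : ℝ² → ℝ⁴ be smooth, written f = (f⁰, f¹, f², f³)ᵗ, with f⁰ nowhere zero, and suppose f satisfies the canonical system f_{xx} = b f_y + p f and f_{yy} = c f_x + q f. Define S : ℝ² → ℝ³ by S = (1/f⁰)(f¹, f², f³)ᵗ. Then S_{xx} = b S_y − 2 (f⁰_x/f⁰) S_x and S_{yy} = c S_x − 2 (f⁰_y/f⁰) S_y. (In particular, x and y are asymptotic coordinates on S.) -/
open Matrix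

noncomputable section

/-- Partial derivative in the `x`-direction of a scalar function on `ℝ²`. -/
def pdx (f : ℝ × ℝ → ℝ) (z : ℝ × ℝ) : ℝ := deriv (fun t => f (t, z.2)) z.1

/-- Partial derivative in the `y`-direction of a scalar function on `ℝ²`. -/
def pdy (f : ℝ × ℝ → ℝ) (z : ℝ × ℝ) : ℝ := deriv (fun t => f (z.1, t)) z.2

/-- Componentwise partial `x`-derivative of a vector-valued function on `ℝ²`. -/
def pdxV {n : ℕ} (f : ℝ × ℝ → Fin n → ℝ) (z : ℝ × ℝ) : Fin n → ℝ :=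
  fun i => pdx (fun w => f w i) z

/-- Componentwise partial `y`-derivative of a vector-valued function on `ℝ²`. -/
def pdyV {n : ℕ} (f : ℝ × ℝ → Fin n → ℝ) (z : ℝ × ℝ) : Fin n → ℝ :=
  fun i => pdy (fun w => f w i) z

lemma key (u v : ℝ → ℝ) (hu : ContDiff ℝ (⊤:ℕ∞) u) (hv : ContDiff ℝ (⊤:ℕ∞) v)
    (hu0 : ∀ t, u t ≠ 0) (t B P uy vy : ℝ)
    (huu : deriv (deriv u) t = B * uy + P * u t)
    (hvv : deriv (deriv v) t = B * vy + P * v t) :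
    deriv (deriv (fun s => v s / u s)) t
      = B * ((vy * u t - v t * uy) / (u t)^2)
        - 2 * (deriv u t / u t) * ((deriv v t * u t - v t * deriv u t) / (u t)^2) := by
  have hud : Differentiable ℝ u := hu.differentiable (by simp)
  have hvd : Differentiable ℝ v := hv.differentiable (by simp)
  have hud' : Differentiable ℝ (deriv u) :=
    ((contDiff_infty_iff_deriv.mp hu).2).differentiable (by simp)
  have hvd' : Differentiable ℝ (deriv v) :=
    ((contDiff_infty_iff_deriv.mp hv).2).differentiable (by simp)
  have h1 : deriv (fun s => v s / u s)
      = fun s => (deriv v s * u s - v s * deriv u s) / (u s)^2 := by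
    funext s
    rw [deriv_fun_div (hvd s) (hud s) (hu0 s)]
  rw [h1]
  have hN : HasDerivAt (fun s => deriv v s * u s - v s * deriv u s)
      ((deriv (deriv v) t * u t + deriv v t * deriv u t)
        - (deriv v t * deriv u t + v t * deriv (deriv u) t)) t :=
    ((hvd' t).hasDerivAt.mul (hud t).hasDerivAt).sub
      ((hvd t).hasDerivAt.mul (hud' t).hasDerivAt)
  have hD := ((hud t).hasDerivAt).fun_pow 2
  have hQ := hN.fun_div hD (pow_ne_zero 2 (hu0 t))
  rw [hQ.deriv, huu, hvv]
  have h0 := hu0 t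
  field_simp
  ring


/-- If `f = (f⁰, f¹, f², f³)ᵗ : ℝ² → ℝ⁴` is smooth with `f⁰` nowhere zero and satisfies
the canonical system `f_{xx} = b f_y + p f`, `f_{yy} = c f_x + q f`, then the surface
`S = (1/f⁰)(f¹, f², f³)ᵗ` satisfies `S_{xx} = b S_y − 2 (f⁰_x/f⁰) S_x` and
`S_{yy} = c S_x − 2 (f⁰_y/f⁰) S_y`; in particular `x` and `y` are asymptotic coordinates. -/
theorem asymptotic_coordinates
    (b c p q : ℝ × ℝ → ℝ)
    (hb : ContDiff ℝ (⊤ : ℕ∞) b) (hc : ContDiff ℝ (⊤ : ℕ∞) c)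
    (hp : ContDiff ℝ (⊤ : ℕ∞) p) (hq : ContDiff ℝ (⊤ : ℕ∞) q)
    (f : ℝ × ℝ → Fin 4 → ℝ) (hf : ContDiff ℝ (⊤ : ℕ∞) f)
    (hf0 : ∀ z, f z 0 ≠ 0)
    (hxx : ∀ z, pdxV (pdxV f) z = b z • pdyV f z + p z • f z)
    (hyy : ∀ z, pdyV (pdyV f) z = c z • pdxV f z + q z • f z)
    (S : ℝ × ℝ → Fin 3 → ℝ) (hS : S = fun z i => f z i.succ / f z 0) :
    ∀ z, pdxV (pdxV S) z
          = b z • pdyV S z - (2 * (pdx (fun w => f w 0) z / f z 0)) • pdxV S z ∧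
        pdyV (pdyV S) z
          = c z • pdxV S z - (2 * (pdy (fun w => f w 0) z / f z 0)) • pdyV S z := by
  subst hS
  intro z
  have hfc : ∀ j : Fin 4, ContDiff ℝ (⊤:ℕ∞) (fun w => f w j) := fun j => contDiff_pi.mp hf j
  have hfd : ∀ j : Fin 4, Differentiable ℝ (fun w : ℝ × ℝ => f w j) :=
    fun j => (hfc j).differentiable (by simp)
  constructor
  · funext i
    simp only [pdxV, pdx, pdyV, pdy, Pi.add_apply, Pi.smul_apply, Pi.sub_apply, smul_eq_mul]
    have hline : ContDiff ℝ (⊤:ℕ∞) (fun t : ℝ => ((t, z.2) : ℝ×ℝ)) :=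
      contDiff_id.prodMk contDiff_const
    have hlin2 : ContDiff ℝ (⊤:ℕ∞) (fun t : ℝ => ((z.1, t) : ℝ×ℝ)) :=
      contDiff_const.prodMk contDiff_id
    have hu : ContDiff ℝ (⊤:ℕ∞) (fun t => f (t, z.2) 0) := (hfc 0).comp hline
    have hv : ContDiff ℝ (⊤:ℕ∞) (fun t => f (t, z.2) i.succ) := (hfc i.succ).comp hline
    have hu0 : ∀ t, f (t, z.2) 0 ≠ 0 := fun t => hf0 (t, z.2)
    have huu : deriv (deriv (fun t => f (t, z.2) 0)) z.1
        = b z * (deriv (fun t => f (z.1, t) 0) z.2) + p z * f (z.1, z.2) 0 := by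
      have h := congrFun (hxx z) 0
      simp only [pdxV, pdx, pdy, pdyV, Pi.add_apply, Pi.smul_apply, smul_eq_mul,
        Prod.mk.eta] at h ⊢
      simpa using h
    have hvv : deriv (deriv (fun t => f (t, z.2) i.succ)) z.1
        = b z * (deriv (fun t => f (z.1, t) i.succ) z.2) + p z * f (z.1, z.2) i.succ := by
      have h := congrFun (hxx z) i.succ
      simp only [pdxV, pdx, pdy, pdyV, Pi.add_apply, Pi.smul_apply, smul_eq_mul,
        Prod.mk.eta] at h ⊢
      simpa using h
    rw [key _ _ hu hv hu0 z.1 (b z) (p z) (deriv (fun t => f (z.1, t) 0) z.2)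
      (deriv (fun t => f (z.1, t) i.succ) z.2) huu hvv]
    have e1 : deriv (fun t => f (z.1, t) i.succ / f (z.1, t) 0) z.2
        = (deriv (fun t => f (z.1, t) i.succ) z.2 * f (z.1, z.2) 0
            - f (z.1, z.2) i.succ * deriv (fun t => f (z.1, t) 0) z.2) / (f (z.1, z.2) 0)^2 := by
      have h1 : DifferentiableAt ℝ (fun t => f (z.1, t) i.succ) z.2 :=
        (((hfc i.succ).comp hlin2).differentiable (by simp)) z.2
      have h2 : DifferentiableAt ℝ (fun t => f (z.1, t) 0) z.2 :=
        (((hfc 0).comp hlin2).differentiable (by simp)) z.2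
      rw [deriv_fun_div h1 h2 (hf0 (z.1, z.2))]
    have e2 : deriv (fun t => f (t, z.2) i.succ / f (t, z.2) 0) z.1
        = (deriv (fun t => f (t, z.2) i.succ) z.1 * f (z.1, z.2) 0
            - f (z.1, z.2) i.succ * deriv (fun t => f (t, z.2) 0) z.1) / (f (z.1, z.2) 0)^2 := by
      rw [deriv_fun_div ((hv.differentiable (by simp)) z.1)
        ((hu.differentiable (by simp)) z.1) (hf0 (z.1, z.2))]
    rw [e1, e2]
  · funext i
    simp only [pdxV, pdx, pdyV, pdy, Pi.add_apply, Pi.smul_apply, Pi.sub_apply, smul_eq_mul]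
    have hline : ContDiff ℝ (⊤:ℕ∞) (fun t : ℝ => ((z.1, t) : ℝ×ℝ)) :=
      contDiff_const.prodMk contDiff_id
    have hlin2 : ContDiff ℝ (⊤:ℕ∞) (fun t : ℝ => ((t, z.2) : ℝ×ℝ)) :=
      contDiff_id.prodMk contDiff_const
    have hu : ContDiff ℝ (⊤:ℕ∞) (fun t => f (z.1, t) 0) := (hfc 0).comp hline
    have hv : ContDiff ℝ (⊤:ℕ∞) (fun t => f (z.1, t) i.succ) := (hfc i.succ).comp hline
    have hu0 : ∀ t, f (z.1, t) 0 ≠ 0 := fun t => hf0 (z.1, t)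
    have huu : deriv (deriv (fun t => f (z.1, t) 0)) z.2
        = c z * (deriv (fun t => f (t, z.2) 0) z.1) + q z * f (z.1, z.2) 0 := by
      have h := congrFun (hyy z) 0
      simp only [pdxV, pdx, pdy, pdyV, Pi.add_apply, Pi.smul_apply, smul_eq_mul,
        Prod.mk.eta] at h ⊢
      simpa using h
    have hvv : deriv (deriv (fun t => f (z.1, t) i.succ)) z.2
        = c z * (deriv (fun t => f (t, z.2) i.succ) z.1) + q z * f (z.1, z.2) i.succ := by
      have h := congrFun (hyy z) i.succ
      simp only [pdxV, pdx, pdy, pdyV, Pi.add_apply, Pi.smul_apply, smul_eq_mul,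
        Prod.mk.eta] at h ⊢
      simpa using h
    rw [key _ _ hu hv hu0 z.2 (c z) (q z) (deriv (fun t => f (t, z.2) 0) z.1)
      (deriv (fun t => f (t, z.2) i.succ) z.1) huu hvv]
    have e1 : deriv (fun t => f (t, z.2) i.succ / f (t, z.2) 0) z.1
        = (deriv (fun t => f (t, z.2) i.succ) z.1 * f (z.1, z.2) 0
            - f (z.1, z.2) i.succ * deriv (fun t => f (t, z.2) 0) z.1) / (f (z.1, z.2) 0)^2 := by
      have h1 : DifferentiableAt ℝ (fun t => f (t, z.2) i.succ) z.1 :=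
        (((hfc i.succ).comp hlin2).differentiable (by simp)) z.1
      have h2 : DifferentiableAt ℝ (fun t => f (t, z.2) 0) z.1 :=
        (((hfc 0).comp hlin2).differentiable (by simp)) z.1
      rw [deriv_fun_div h1 h2 (hf0 (z.1, z.2))]
    have e2 : deriv (fun t => f (z.1, t) i.succ / f (z.1, t) 0) z.2
        = (deriv (fun t => f (z.1, t) i.succ) z.2 * f (z.1, z.2) 0
            - f (z.1, z.2) i.succ * deriv (fun t => f (z.1, t) 0) z.2) / (f (z.1, z.2) 0)^2 := by
      rw [deriv_fun_div ((hv.differentiable (by simp)) z.2)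
        ((hu.differentiable (by simp)) z.2) (hf0 (z.1, z.2))]
    rw [e1, e2]
end
end

section
/- The compatibility (zero-curvature) condition ∂_y U − ∂_x V + V·U − U·V = 0 for the Wilczynski coefficient matrices U, V holds on ℝ² if and only if the projective Gauss–Codazzi equations hold: Q_x = k_y + k (b_y/b), P_y = ℓ_x + ℓ (c_x/c), and b Q_y + 2 b_y Q = c P_x + 2 c_x P. -/
open Matrix

noncomputable section

/-- `k = (bc − ∂_y(b_x/b))/2`. -/
def kF (b c : ℝ × ℝ → ℝ) (z : ℝ × ℝ) : ℝ :=
  (b z * c z - pdy (fun w => pdx b w / b w) z) / 2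

/-- `ℓ = (bc − ∂_y(c_x/c))/2`. -/
def lF (b c : ℝ × ℝ → ℝ) (z : ℝ × ℝ) : ℝ :=
  (b z * c z - pdy (fun w => pdx c w / c w) z) / 2

/-- `P = p + b_y/2 − c_{xx}/(2c) + c_x²/(4c²)`. -/
def PF (b c p : ℝ × ℝ → ℝ) (z : ℝ × ℝ) : ℝ :=
  p z + pdy b z / 2 - pdx (fun w => pdx c w) z / (2 * c z) + (pdx c z) ^ 2 / (4 * (c z) ^ 2)

/-- `Q = q + c_x/2 − b_{yy}/(2b) + b_y²/(4b²)`. -/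
def QF (b c q : ℝ × ℝ → ℝ) (z : ℝ × ℝ) : ℝ :=
  q z + pdx c z / 2 - pdy (fun w => pdy b w) z / (2 * b z) + (pdy b z) ^ 2 / (4 * (b z) ^ 2)

/-- The Wilczynski coefficient matrix `U`. -/
def Umat (b c p q : ℝ × ℝ → ℝ) (z : ℝ × ℝ) : Matrix (Fin 4) (Fin 4) ℝ :=
  !![pdx c z / (2 * c z), PF b c p z, kF b c z, b z * QF b c q z;
     1, -(pdx c z / (2 * c z)), 0, kF b c z;
     0, b z, pdx c z / (2 * c z), PF b c p z;
     0, 0, 1, -(pdx c z / (2 * c z))]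

/-- The Wilczynski coefficient matrix `V`. -/
def Vmat (b c p q : ℝ × ℝ → ℝ) (z : ℝ × ℝ) : Matrix (Fin 4) (Fin 4) ℝ :=
  !![pdy b z / (2 * b z), lF b c z, QF b c q z, c z * PF b c p z;
     0, pdy b z / (2 * b z), c z, QF b c q z;
     1, 0, -(pdy b z / (2 * b z)), lF b c z;
     0, 1, 0, -(pdy b z / (2 * b z))]

/-- Entrywise partial `x`-derivative of a matrix-valued function on `ℝ²`. -/
def pdxM (F : ℝ × ℝ → Matrix (Fin 4) (Fin 4) ℝ) (z : ℝ × ℝ) : Matrix (Fin 4) (Fin 4) ℝ :=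
  Matrix.of fun i j => pdx (fun w => F w i j) z

/-- Entrywise partial `y`-derivative of a matrix-valued function on `ℝ²`. -/
def pdyM (F : ℝ × ℝ → Matrix (Fin 4) (Fin 4) ℝ) (z : ℝ × ℝ) : Matrix (Fin 4) (Fin 4) ℝ :=
  Matrix.of fun i j => pdy (fun w => F w i j) z

/-! ### Auxiliary calculus lemmas -/

lemma top_diff {f : ℝ × ℝ → ℝ} (hf : ContDiff ℝ (⊤ : ℕ∞) f) : Differentiable ℝ f :=
  hf.differentiable (by simp)

lemma hasDerivAt_pdx' {f : ℝ × ℝ → ℝ} (hf : Differentiable ℝ f) (z : ℝ × ℝ) :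
    HasDerivAt (fun t => f (t, z.2)) (fderiv ℝ f z ((1:ℝ),(0:ℝ))) z.1 := by
  have hline : HasDerivAt (fun t : ℝ => (t, z.2)) ((1:ℝ),(0:ℝ)) z.1 :=
    (hasDerivAt_id z.1).prodMk (hasDerivAt_const z.1 z.2)
  exact (hf z).hasFDerivAt.comp_hasDerivAt z.1 hline

lemma hasDerivAt_pdy' {f : ℝ × ℝ → ℝ} (hf : Differentiable ℝ f) (z : ℝ × ℝ) :
    HasDerivAt (fun t => f (z.1, t)) (fderiv ℝ f z ((0:ℝ),(1:ℝ))) z.2 := by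
  have hline : HasDerivAt (fun t : ℝ => (z.1, t)) ((0:ℝ),(1:ℝ)) z.2 :=
    (hasDerivAt_const z.2 z.1).prodMk (hasDerivAt_id z.2)
  exact (hf z).hasFDerivAt.comp_hasDerivAt z.2 hline

lemma pdx_eq_fderiv {f : ℝ × ℝ → ℝ} (hf : Differentiable ℝ f) (z : ℝ × ℝ) :
    pdx f z = fderiv ℝ f z ((1:ℝ),(0:ℝ)) := (hasDerivAt_pdx' hf z).deriv

lemma pdy_eq_fderiv {f : ℝ × ℝ → ℝ} (hf : Differentiable ℝ f) (z : ℝ × ℝ) :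
    pdy f z = fderiv ℝ f z ((0:ℝ),(1:ℝ)) := (hasDerivAt_pdy' hf z).deriv

lemma hasDerivAt_pdx {f : ℝ × ℝ → ℝ} (hf : Differentiable ℝ f) (z : ℝ × ℝ) :
    HasDerivAt (fun t => f (t, z.2)) (pdx f z) z.1 := by
  rw [pdx_eq_fderiv hf]; exact hasDerivAt_pdx' hf z

lemma hasDerivAt_pdy {f : ℝ × ℝ → ℝ} (hf : Differentiable ℝ f) (z : ℝ × ℝ) :
    HasDerivAt (fun t => f (z.1, t)) (pdy f z) z.2 := by
  rw [pdy_eq_fderiv hf]; exact hasDerivAt_pdy' hf z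

lemma contDiff_pdx {f : ℝ × ℝ → ℝ} (hf : ContDiff ℝ (⊤:ℕ∞) f) : ContDiff ℝ (⊤:ℕ∞) (pdx f) := by
  have : pdx f = fun z => fderiv ℝ f z ((1:ℝ),(0:ℝ)) :=
    funext fun z => pdx_eq_fderiv (top_diff hf) z
  rw [this]; exact (hf.fderiv_right (le_refl _)).clm_apply contDiff_const

lemma contDiff_pdy {f : ℝ × ℝ → ℝ} (hf : ContDiff ℝ (⊤:ℕ∞) f) : ContDiff ℝ (⊤:ℕ∞) (pdy f) := by
  have : pdy f = fun z => fderiv ℝ f z ((0:ℝ),(1:ℝ)) :=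
    funext fun z => pdy_eq_fderiv (top_diff hf) z
  rw [this]; exact (hf.fderiv_right (le_refl _)).clm_apply contDiff_const

lemma pdx_pdy_comm {f : ℝ × ℝ → ℝ} (hf : ContDiff ℝ (⊤:ℕ∞) f) (z : ℝ × ℝ) :
    pdx (pdy f) z = pdy (pdx f) z := by
  have hd : Differentiable ℝ f := top_diff hf
  have hfd : ContDiff ℝ (⊤:ℕ∞) (fderiv ℝ f) := hf.fderiv_right (le_refl _)
  have hfdd : Differentiable ℝ (fderiv ℝ f) := hfd.differentiable (by simp)
  have hsym := second_derivative_symmetric (f' := fderiv ℝ f) (f'' := fderiv ℝ (fderiv ℝ f) z)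
      (fun y => (hd y).hasFDerivAt) (hfdd z).hasFDerivAt
  have epy : pdy f = fun w => fderiv ℝ f w ((0:ℝ),(1:ℝ)) := funext fun w => pdy_eq_fderiv hd w
  have epx : pdx f = fun w => fderiv ℝ f w ((1:ℝ),(0:ℝ)) := funext fun w => pdx_eq_fderiv hd w
  rw [pdx_eq_fderiv (by rw [epy]; exact hfdd.clm_apply (differentiable_const _)) z,
      pdy_eq_fderiv (by rw [epx]; exact hfdd.clm_apply (differentiable_const _)) z, epy, epx,
      fderiv_clm_apply (hfdd z) (differentiableAt_const _),
      fderiv_clm_apply (hfdd z) (differentiableAt_const _)]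
  simp [hsym ((1:ℝ),(0:ℝ)) ((0:ℝ),(1:ℝ))]

lemma pdx_mul {f g : ℝ × ℝ → ℝ} (hf : Differentiable ℝ f) (hg : Differentiable ℝ g) (z : ℝ × ℝ) :
    pdx (fun w => f w * g w) z = pdx f z * g z + f z * pdx g z := by
  simpa [pdx, Pi.mul_def] using ((hasDerivAt_pdx hf z).mul (hasDerivAt_pdx hg z)).deriv

lemma pdy_mul {f g : ℝ × ℝ → ℝ} (hf : Differentiable ℝ f) (hg : Differentiable ℝ g) (z : ℝ × ℝ) :
    pdy (fun w => f w * g w) z = pdy f z * g z + f z * pdy g z := by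
  simpa [pdy, Pi.mul_def] using ((hasDerivAt_pdy hf z).mul (hasDerivAt_pdy hg z)).deriv

lemma pdx_div {f g : ℝ × ℝ → ℝ} {z : ℝ × ℝ} (hf : Differentiable ℝ f) (hg : Differentiable ℝ g)
    (hg0 : g z ≠ 0) :
    pdx (fun w => f w / g w) z = (pdx f z * g z - f z * pdx g z) / g z ^ 2 := by
  simpa [pdx, Pi.div_def] using ((hasDerivAt_pdx hf z).div (hasDerivAt_pdx hg z) hg0).deriv

lemma pdy_div {f g : ℝ × ℝ → ℝ} {z : ℝ × ℝ} (hf : Differentiable ℝ f) (hg : Differentiable ℝ g)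
    (hg0 : g z ≠ 0) :
    pdy (fun w => f w / g w) z = (pdy f z * g z - f z * pdy g z) / g z ^ 2 := by
  simpa [pdy, Pi.div_def] using ((hasDerivAt_pdy hf z).div (hasDerivAt_pdy hg z) hg0).deriv

lemma pdx_div_const (f : ℝ × ℝ → ℝ) (a : ℝ) (z : ℝ × ℝ) :
    pdx (fun w => f w / a) z = pdx f z / a := by
  simp only [pdx]; exact deriv_div_const a

lemma pdy_div_const (f : ℝ × ℝ → ℝ) (a : ℝ) (z : ℝ × ℝ) :
    pdy (fun w => f w / a) z = pdy f z / a := by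
  simp only [pdy]; exact deriv_div_const a

lemma pdy_neg (f : ℝ × ℝ → ℝ) (z : ℝ × ℝ) : pdy (fun w => -f w) z = -pdy f z := by
  simp only [pdy]; exact deriv.neg

lemma pdx_neg (f : ℝ × ℝ → ℝ) (z : ℝ × ℝ) : pdx (fun w => -f w) z = -pdx f z := by
  simp only [pdx]; exact deriv.neg

lemma pdy_const (a : ℝ) (z : ℝ × ℝ) : pdy (fun _ => a) z = 0 := by
  simp only [pdy]; exact deriv_const _ _

lemma pdx_const (a : ℝ) (z : ℝ × ℝ) : pdx (fun _ => a) z = 0 := by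
  simp only [pdx]; exact deriv_const _ _

/-! ### Smoothness of the coefficient functions -/

section smooth
variable {b c p q : ℝ × ℝ → ℝ}

lemma contDiff_kF (hb : ContDiff ℝ (⊤:ℕ∞) b) (hc : ContDiff ℝ (⊤:ℕ∞) c)
    (hb0 : ∀ z, b z ≠ 0) : ContDiff ℝ (⊤:ℕ∞) (kF b c) := by
  unfold kF
  exact ((hb.mul hc).sub (contDiff_pdy ((contDiff_pdx hb).div hb hb0))).div_const 2

lemma contDiff_lF (hb : ContDiff ℝ (⊤:ℕ∞) b) (hc : ContDiff ℝ (⊤:ℕ∞) c)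
    (hc0 : ∀ z, c z ≠ 0) : ContDiff ℝ (⊤:ℕ∞) (lF b c) := by
  unfold lF
  exact ((hb.mul hc).sub (contDiff_pdy ((contDiff_pdx hc).div hc hc0))).div_const 2

lemma contDiff_PF (hb : ContDiff ℝ (⊤:ℕ∞) b) (hc : ContDiff ℝ (⊤:ℕ∞) c)
    (hp : ContDiff ℝ (⊤:ℕ∞) p) (hc0 : ∀ z, c z ≠ 0) : ContDiff ℝ (⊤:ℕ∞) (PF b c p) := by
  unfold PF
  exact ((hp.add ((contDiff_pdy hb).div_const 2)).sub
      ((contDiff_pdx (contDiff_pdx hc)).div (contDiff_const.mul hc)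
        (fun z => mul_ne_zero two_ne_zero (hc0 z)))).add
    (((contDiff_pdx hc).pow 2).div (contDiff_const.mul (hc.pow 2))
      (fun z => mul_ne_zero four_ne_zero (pow_ne_zero 2 (hc0 z))))

lemma contDiff_QF (hb : ContDiff ℝ (⊤:ℕ∞) b) (hc : ContDiff ℝ (⊤:ℕ∞) c)
    (hq : ContDiff ℝ (⊤:ℕ∞) q) (hb0 : ∀ z, b z ≠ 0) : ContDiff ℝ (⊤:ℕ∞) (QF b c q) := by
  unfold QF
  exact ((hq.add ((contDiff_pdx hc).div_const 2)).sub
      ((contDiff_pdy (contDiff_pdy hb)).div (contDiff_const.mul hb)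
        (fun z => mul_ne_zero two_ne_zero (hb0 z)))).add
    (((contDiff_pdy hb).pow 2).div (contDiff_const.mul (hb.pow 2))
      (fun z => mul_ne_zero four_ne_zero (pow_ne_zero 2 (hb0 z))))

end smooth

set_option maxHeartbeats 4000000 in
/-- The zero-curvature condition `∂_y U − ∂_x V + V·U − U·V = 0` for the Wilczynski
coefficient matrices holds on `ℝ²` iff the projective Gauss–Codazzi equations hold:
`Q_x = k_y + k b_y/b`, `P_y = ℓ_x + ℓ c_x/c` and `b Q_y + 2 b_y Q = c P_x + 2 c_x P`. -/
theorem zero_curvature_iff_gauss_codazzi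
    (b c p q : ℝ × ℝ → ℝ)
    (hb : ContDiff ℝ (⊤ : ℕ∞) b) (hc : ContDiff ℝ (⊤ : ℕ∞) c)
    (hp : ContDiff ℝ (⊤ : ℕ∞) p) (hq : ContDiff ℝ (⊤ : ℕ∞) q)
    (hb0 : ∀ z, b z ≠ 0) (hc0 : ∀ z, c z ≠ 0) :
    (∀ z, pdyM (Umat b c p q) z - pdxM (Vmat b c p q) z
        + Vmat b c p q z * Umat b c p q z - Umat b c p q z * Vmat b c p q z = 0)
    ↔ (∀ z,
        pdx (QF b c q) z = pdy (kF b c) z + kF b c z * (pdy b z / b z) ∧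
        pdy (PF b c p) z = pdx (lF b c) z + lF b c z * (pdx c z / c z) ∧
        b z * pdy (QF b c q) z + 2 * pdy b z * QF b c q z
          = c z * pdx (PF b c p) z + 2 * pdx c z * PF b c p z) := by
  have db : Differentiable ℝ b := top_diff hb
  have dc : Differentiable ℝ c := top_diff hc
  have dbx : Differentiable ℝ (pdx b) := top_diff (contDiff_pdx hb)
  have dby : Differentiable ℝ (pdy b) := top_diff (contDiff_pdy hb)
  have dcx : Differentiable ℝ (pdx c) := top_diff (contDiff_pdx hc)
  have dQ : Differentiable ℝ (QF b c q) := top_diff (contDiff_QF hb hc hq hb0)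
  have dP : Differentiable ℝ (PF b c p) := top_diff (contDiff_PF hb hc hp hc0)
  have key : ∀ z, (pdyM (Umat b c p q) z - pdxM (Vmat b c p q) z
        + Vmat b c p q z * Umat b c p q z - Umat b c p q z * Vmat b c p q z = 0)
      ↔ (pdx (QF b c q) z = pdy (kF b c) z + kF b c z * (pdy b z / b z) ∧
        pdy (PF b c p) z = pdx (lF b c) z + lF b c z * (pdx c z / c z) ∧
        b z * pdy (QF b c q) z + 2 * pdy b z * QF b c q z
          = c z * pdx (PF b c p) z + 2 * pdx c z * PF b c p z) := by
    intro z
    set E1 : ℝ := pdy (kF b c) z + kF b c z * (pdy b z / b z) - pdx (QF b c q) z with hE1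
    set E2 : ℝ := pdy (PF b c p) z - pdx (lF b c) z - lF b c z * (pdx c z / c z) with hE2
    set E3 : ℝ := b z * pdy (QF b c q) z + 2 * pdy b z * QF b c q z
        - (c z * pdx (PF b c p) z + 2 * pdx c z * PF b c p z) with hE3
    have hSch : pdx (fun w => pdy b w / b w) z = pdy (fun w => pdx b w / b w) z := by
      rw [pdx_div dby db (hb0 z), pdy_div dbx db (hb0 z), pdx_pdy_comm hb z]
      ring
    have hD1 : pdy (fun w => pdx c w / (2 * c w)) z = pdy (fun w => pdx c w / c w) z / 2 := by
      have e : (fun w => pdx c w / (2 * c w)) = fun w => (pdx c w / c w) / 2 := by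
        funext w; rw [div_div, mul_comm]
      rw [e, pdy_div_const]
    have hD2 : pdx (fun w => pdy b w / (2 * b w)) z = pdy (fun w => pdx b w / b w) z / 2 := by
      have e : (fun w => pdy b w / (2 * b w)) = fun w => (pdy b w / b w) / 2 := by
        funext w; rw [div_div, mul_comm]
      rw [e, pdx_div_const, hSch]
    have hD3 : pdy (fun w => b w * QF b c q w) z
        = pdy b z * QF b c q z + b z * pdy (QF b c q) z := pdy_mul db dQ z
    have hD4 : pdx (fun w => c w * PF b c p w) z
        = pdx c z * PF b c p z + c z * pdx (PF b c p) z := pdx_mul dc dP z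
    have hbz : b z ≠ 0 := hb0 z
    have hcz : c z ≠ 0 := hc0 z
    have hkz : kF b c z = (b z * c z - pdy (fun w => pdx b w / b w) z) / 2 := rfl
    have hlz : lF b c z = (b z * c z - pdy (fun w => pdx c w / c w) z) / 2 := rfl
    have hM : pdyM (Umat b c p q) z - pdxM (Vmat b c p q) z
        + Vmat b c p q z * Umat b c p q z - Umat b c p q z * Vmat b c p q z
        = !![0, E2, E1, E3; 0, 0, 0, E1; 0, 0, 0, E2; 0, 0, 0, 0] := by
      ext i j
      fin_cases i <;> fin_cases j
      all_goals
        simp [pdyM, pdxM, Umat, Vmat, Matrix.mul_apply, Fin.sum_univ_four,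
          hD1, hD2, hD3, hD4, pdy_neg, pdx_neg, pdy_const, pdx_const,
          Matrix.vecHead, Matrix.vecTail, hE1, hE2, hE3, hkz, hlz]
      all_goals try (field_simp; try ring)
      all_goals try (field_simp; try ring)
      all_goals ring
    rw [hM]
    constructor
    · intro h
      have h1 := congrFun (congrFun h 0) 2
      have h2 := congrFun (congrFun h 0) 1
      have h3 := congrFun (congrFun h 0) 3
      simp only [hE1, hE2, hE3] at h1 h2 h3
      simp at h1 h2 h3
      refine ⟨by linarith, by linarith, by linarith⟩
    · rintro ⟨h1, h2, h3⟩
      have e1 : E1 = 0 := by rw [hE1]; linarith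
      have e2 : E2 = 0 := by rw [hE2]; linarith
      have e3 : E3 = 0 := by rw [hE3]; linarith
      ext i j
      fin_cases i <;> fin_cases j <;> simp [e1, e2, e3, Matrix.vecHead, Matrix.vecTail]
  exact ⟨fun h z => (key z).mp (h z), fun h z => (key z).mpr (h z)⟩
end
end

section
/- Let F : ℝ² → GL₄(ℝ) be smooth and satisfy F_x = F·U and F_y = F·V, where U, V are the Wilczynski coefficient matrices, and define the first-order Gauss map g₁ = F J₁ Fᵗ with J₁ the antidiagonal matrix with entries (1, 1, 1, 1). Then ∂_x g₁ = 2 F·[[bQ, k, P, 0], [k, 0, 0, 1], [P, 0, b, 0], [0, 1, 0, 0]]·Fᵗ and ∂_y g₁ = 2 F·[[cP, Q, ℓ, 0], [Q, c, 0, 0], [ℓ, 0, 0, 1], [0, 0, 1, 0]]·Fᵗ. -/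
open Matrix

noncomputable section

/-- The antidiagonal matrix `J₁ = offdiag(1,1,1,1)`. -/
def J₁ : Matrix (Fin 4) (Fin 4) ℝ := !![0,0,0,1; 0,0,1,0; 0,1,0,0; 1,0,0,0]


section Aux

lemma prodRule_x (F : ℝ × ℝ → Matrix (Fin 4) (Fin 4) ℝ)
    (hFsm : ∀ i j, ContDiff ℝ (⊤ : ℕ∞) fun z => F z i j) (z : ℝ × ℝ) :
    pdxM (fun w => F w * J₁ * (F w)ᵀ) z =
      pdxM F z * J₁ * (F z)ᵀ + F z * J₁ * (pdxM F z)ᵀ := by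
  have H : ∀ i j, HasDerivAt (fun t => F (t, z.2) i j) (pdx (fun w => F w i j) z) z.1 := by
    intro i j
    have hdiff : Differentiable ℝ (fun t : ℝ => F (t, z.2) i j) :=
      (((hFsm i j).comp (contDiff_prodMk_left z.2)).differentiable (by simp))
    simpa [pdx] using (hdiff z.1).hasDerivAt
  ext i j
  have key : HasDerivAt (fun t => ∑ l, (∑ k, F (t, z.2) i k * J₁ k l) * F (t, z.2) j l)
      (∑ l, ((∑ k, pdx (fun w => F w i k) z * J₁ k l) * F z j l
        + (∑ k, F z i k * J₁ k l) * pdx (fun w => F w j l) z)) z.1 := by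
    apply HasDerivAt.fun_sum
    intro l _
    have h1 : HasDerivAt (fun t => (∑ k, F (t, z.2) i k * J₁ k l))
        (∑ k, pdx (fun w => F w i k) z * J₁ k l) z.1 :=
      HasDerivAt.fun_sum fun k _ => (H i k).mul_const (J₁ k l)
    have := h1.fun_mul (H j l)
    simpa using this
  have key2 : pdx (fun w => ∑ l, (∑ k, F w i k * J₁ k l) * F w j l) z
      = ∑ l, ((∑ k, pdx (fun w => F w i k) z * J₁ k l) * F z j l
        + (∑ k, F z i k * J₁ k l) * pdx (fun w => F w j l) z) := by
    have := key.deriv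
    simpa [pdx] using this
  simp only [pdxM, Matrix.of_apply, Matrix.add_apply, Matrix.mul_apply,
    Matrix.transpose_apply]
  rw [key2, Finset.sum_add_distrib]

lemma prodRule_y (F : ℝ × ℝ → Matrix (Fin 4) (Fin 4) ℝ)
    (hFsm : ∀ i j, ContDiff ℝ (⊤ : ℕ∞) fun z => F z i j) (z : ℝ × ℝ) :
    pdyM (fun w => F w * J₁ * (F w)ᵀ) z =
      pdyM F z * J₁ * (F z)ᵀ + F z * J₁ * (pdyM F z)ᵀ := by
  have H : ∀ i j, HasDerivAt (fun t => F (z.1, t) i j) (pdy (fun w => F w i j) z) z.2 := by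
    intro i j
    have hdiff : Differentiable ℝ (fun t : ℝ => F (z.1, t) i j) :=
      (((hFsm i j).comp (contDiff_prodMk_right z.1)).differentiable (by simp))
    simpa [pdy] using (hdiff z.2).hasDerivAt
  ext i j
  have key : HasDerivAt (fun t => ∑ l, (∑ k, F (z.1, t) i k * J₁ k l) * F (z.1, t) j l)
      (∑ l, ((∑ k, pdy (fun w => F w i k) z * J₁ k l) * F z j l
        + (∑ k, F z i k * J₁ k l) * pdy (fun w => F w j l) z)) z.2 := by
    apply HasDerivAt.fun_sum
    intro l _
    have h1 : HasDerivAt (fun t => (∑ k, F (z.1, t) i k * J₁ k l))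
        (∑ k, pdy (fun w => F w i k) z * J₁ k l) z.2 :=
      HasDerivAt.fun_sum fun k _ => (H i k).mul_const (J₁ k l)
    have := h1.fun_mul (H j l)
    simpa using this
  have key2 : pdy (fun w => ∑ l, (∑ k, F w i k * J₁ k l) * F w j l) z
      = ∑ l, ((∑ k, pdy (fun w => F w i k) z * J₁ k l) * F z j l
        + (∑ k, F z i k * J₁ k l) * pdy (fun w => F w j l) z) := by
    have := key.deriv
    simpa [pdy] using this
  simp only [pdyM, Matrix.of_apply, Matrix.add_apply, Matrix.mul_apply,
    Matrix.transpose_apply]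
  rw [key2, Finset.sum_add_distrib]

lemma U_alg (b c p q : ℝ × ℝ → ℝ) (z : ℝ × ℝ) :
    Umat b c p q z * J₁ + J₁ * (Umat b c p q z)ᵀ = (2 : ℝ) •
      !![b z * QF b c q z, kF b c z, PF b c p z, 0;
         kF b c z, 0, 0, 1;
         PF b c p z, 0, b z, 0;
         0, 1, 0, 0] := by
  ext i j
  simp only [Matrix.add_apply, Matrix.mul_apply, Matrix.transpose_apply, Fin.sum_univ_four,
    Matrix.smul_apply, smul_eq_mul]
  fin_cases i <;> fin_cases j <;> simp [Umat, J₁, Matrix.vecHead, Matrix.vecTail, Function.comp] <;> ring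

lemma V_alg (b c p q : ℝ × ℝ → ℝ) (z : ℝ × ℝ) :
    Vmat b c p q z * J₁ + J₁ * (Vmat b c p q z)ᵀ = (2 : ℝ) •
      !![c z * PF b c p z, QF b c q z, lF b c z, 0;
         QF b c q z, c z, 0, 0;
         lF b c z, 0, 0, 1;
         0, 0, 1, 0] := by
  ext i j
  simp only [Matrix.add_apply, Matrix.mul_apply, Matrix.transpose_apply, Fin.sum_univ_four,
    Matrix.smul_apply, smul_eq_mul]
  fin_cases i <;> fin_cases j <;> simp [Vmat, J₁, Matrix.vecHead, Matrix.vecTail, Function.comp] <;> ring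

end Aux

/-- For a smooth frame `F : ℝ² → GL₄ℝ` with `F_x = F·U`, `F_y = F·V`, the first-order
Gauss map `g₁ = F J₁ Fᵗ` satisfies the stated formulas for `∂_x g₁` and `∂_y g₁`. -/
theorem firstOrderGaussMap_derivatives
    (b c p q : ℝ × ℝ → ℝ)
    (hb : ContDiff ℝ (⊤ : ℕ∞) b) (hc : ContDiff ℝ (⊤ : ℕ∞) c)
    (hp : ContDiff ℝ (⊤ : ℕ∞) p) (hq : ContDiff ℝ (⊤ : ℕ∞) q)
    (hb0 : ∀ z, b z ≠ 0) (hc0 : ∀ z, c z ≠ 0)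
    (F : ℝ × ℝ → Matrix (Fin 4) (Fin 4) ℝ)
    (hFsm : ∀ i j, ContDiff ℝ (⊤ : ℕ∞) fun z => F z i j)
    (hFgl : ∀ z, IsUnit (F z).det)
    (hFx : ∀ z, pdxM F z = F z * Umat b c p q z)
    (hFy : ∀ z, pdyM F z = F z * Vmat b c p q z)
    (g₁ : ℝ × ℝ → Matrix (Fin 4) (Fin 4) ℝ)
    (hg₁ : g₁ = fun z => F z * J₁ * (F z)ᵀ) :
    ∀ z, pdxM g₁ z = (2 : ℝ) •
          (F z * !![b z * QF b c q z, kF b c z, PF b c p z, 0;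
                    kF b c z, 0, 0, 1;
                    PF b c p z, 0, b z, 0;
                    0, 1, 0, 0] * (F z)ᵀ) ∧
        pdyM g₁ z = (2 : ℝ) •
          (F z * !![c z * PF b c p z, QF b c q z, lF b c z, 0;
                    QF b c q z, c z, 0, 0;
                    lF b c z, 0, 0, 1;
                    0, 0, 1, 0] * (F z)ᵀ) := by
  intro z
  subst hg₁
  constructor
  · rw [prodRule_x F hFsm z, hFx z, Matrix.transpose_mul]
    calc F z * Umat b c p q z * J₁ * (F z)ᵀ
          + F z * J₁ * ((Umat b c p q z)ᵀ * (F z)ᵀ)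
        = F z * (Umat b c p q z * J₁ + J₁ * (Umat b c p q z)ᵀ) * (F z)ᵀ := by
          simp [Matrix.mul_add, Matrix.add_mul, Matrix.mul_assoc]
      _ = _ := by rw [U_alg, Matrix.mul_smul, Matrix.smul_mul]
  · rw [prodRule_y F hFsm z, hFy z, Matrix.transpose_mul]
    calc F z * Vmat b c p q z * J₁ * (F z)ᵀ
          + F z * J₁ * ((Vmat b c p q z)ᵀ * (F z)ᵀ)
        = F z * (Vmat b c p q z * J₁ + J₁ * (Vmat b c p q z)ᵀ) * (F z)ᵀ := by
          simp [Matrix.mul_add, Matrix.add_mul, Matrix.mul_assoc]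
      _ = _ := by rw [V_alg, Matrix.mul_smul, Matrix.smul_mul]
end
end

section
/- Let b, c : ℝ² → ℝ be smooth and nowhere zero, let P : ℝ² → ℝ be smooth and nowhere zero, and set ℓ = (bc − ∂_y(c_x/c))/2. Assume P_y = 0, c P_x + 2 c_x P = 0, and ℓ_x + ℓ (c_x/c) = 0 hold identically. Then ∂_y(c_x/c) = 0 and b_x/b + 2 c_x/c = 0 hold identically; in particular ∂_y(b_x/b − c_x/c) = 0, i.e., (log(b/c))_{xy} = 0, so the surface is isothermally asymptotic. -/
noncomputable section

/-- If `P` is smooth and nowhere zero with `P_y = 0`, `c P_x + 2 c_x P = 0` and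
`ℓ_x + ℓ c_x/c = 0` where `ℓ = (bc − ∂_y(c_x/c))/2`, then `∂_y(c_x/c) = 0` and
`b_x/b + 2 c_x/c = 0`; in particular `∂_y(b_x/b − c_x/c) = 0`, i.e. the surface is
isothermally asymptotic. -/
theorem isothermally_asymptotic
    (b c P : ℝ × ℝ → ℝ)
    (hb : ContDiff ℝ (⊤ : ℕ∞) b) (hc : ContDiff ℝ (⊤ : ℕ∞) c)
    (hP : ContDiff ℝ (⊤ : ℕ∞) P)
    (hb0 : ∀ z, b z ≠ 0) (hc0 : ∀ z, c z ≠ 0) (hP0 : ∀ z, P z ≠ 0)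
    (ℓ : ℝ × ℝ → ℝ)
    (hℓ : ℓ = fun z => (b z * c z - pdy (fun w => pdx c w / c w) z) / 2)
    (hPy : ∀ z, pdy P z = 0)
    (hPx : ∀ z, c z * pdx P z + 2 * pdx c z * P z = 0)
    (hℓx : ∀ z, pdx ℓ z + ℓ z * (pdx c z / c z) = 0) :
    ∀ z, pdy (fun w => pdx c w / c w) z = 0 ∧
         pdx b z / b z + 2 * (pdx c z / c z) = 0 ∧
         pdy (fun w => pdx b w / b w - pdx c w / c w) z = 0 := by
  -- P is constant in y
  have hPconst : ∀ x y : ℝ, P (x, y) = P (x, 0) := by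
    intro x y
    have hdiff : Differentiable ℝ (fun t => P (x, t)) :=
      (hP.comp (contDiff_const.prodMk contDiff_id)).differentiable (by simp)
    exact is_const_of_deriv_eq_zero hdiff (fun t => hPy (x, t)) y 0
  -- hence P_x is constant in y
  have hPxconst : ∀ x y : ℝ, pdx P (x, y) = pdx P (x, 0) := by
    intro x y
    unfold pdx
    simp only
    congr 1
    funext t
    exact hPconst t y
  -- c_x/c = -(P_x/P)/2 pointwise
  have hq : ∀ z, pdx c z / c z = -(pdx P z / P z) / 2 := by
    intro z
    have h := hPx z
    have hc' := hc0 z; have hP' := hP0 z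
    field_simp
    linarith
  -- c_x/c constant in y
  have hqconst : ∀ x y : ℝ, pdx c (x, y) / c (x, y) = pdx c (x, 0) / c (x, 0) := by
    intro x y
    rw [hq (x, y), hq (x, 0), hPxconst x y, hPconst x y]
  -- goal 1
  have goal1 : ∀ z, pdy (fun w => pdx c w / c w) z = 0 := by
    intro z
    show deriv (fun t => pdx c (z.1, t) / c (z.1, t)) z.2 = 0
    have : (fun t => pdx c (z.1, t) / c (z.1, t)) =
        fun _ => pdx c (z.1, 0) / c (z.1, 0) := funext fun t => hqconst z.1 t
    rw [this]
    exact deriv_const _ _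
  -- ℓ = bc/2
  have hl2 : ∀ z, ℓ z = b z * c z / 2 := by
    intro z; rw [hℓ]; simp only; rw [goal1 z]; ring
  -- compute pdx ℓ
  have hpdxl : ∀ z, pdx ℓ z = (pdx b z * c z + b z * pdx c z) / 2 := by
    intro z
    have hbd : DifferentiableAt ℝ (fun t => b (t, z.2)) z.1 :=
      ((hb.comp (contDiff_id.prodMk contDiff_const)).differentiable (by simp)).differentiableAt
    have hcd : DifferentiableAt ℝ (fun t => c (t, z.2)) z.1 :=
      ((hc.comp (contDiff_id.prodMk contDiff_const)).differentiable (by simp)).differentiableAt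
    have hfun : (fun t => ℓ (t, z.2)) = fun t => b (t, z.2) * c (t, z.2) / 2 :=
      funext fun t => hl2 (t, z.2)
    show deriv (fun t => ℓ (t, z.2)) z.1 = _
    rw [hfun]
    rw [deriv_div_const, deriv_fun_mul hbd hcd]
    unfold pdx
    simp
  -- goal 2
  have goal2 : ∀ z, pdx b z / b z + 2 * (pdx c z / c z) = 0 := by
    intro z
    have h := hℓx z
    rw [hpdxl z, hl2 z] at h
    have hb' := hb0 z; have hc' := hc0 z
    field_simp at h ⊢
    have h2 : c z * (pdx b z * c z + 2 * pdx c z * b z) = 0 := by linear_combination c z * h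
    rcases mul_eq_zero.mp h2 with h3 | h3
    · exact absurd h3 hc'
    · linarith
  intro z
  refine ⟨goal1 z, goal2 z, ?_⟩
  -- goal 3
  have hfun : (fun t => pdx b (z.1, t) / b (z.1, t) - pdx c (z.1, t) / c (z.1, t)) =
      fun _ => -3 * (pdx c (z.1, 0) / c (z.1, 0)) := by
    funext t
    have h2 := goal2 (z.1, t)
    have := hqconst z.1 t
    linarith
  show deriv (fun t => pdx b (z.1, t) / b (z.1, t) - pdx c (z.1, t) / c (z.1, t)) z.2 = 0
  rw [hfun]
  exact deriv_const _ _
end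
end

section
/- For every λ ∈ ℝ with λ ≠ 0, the matrices U^λ, V^λ of the loop-parameter family associated to the first-order Gauss map satisfy the twisting conditions −J₁ (U^λ)ᵗ J₁ = U^{−λ} and −J₁ (V^λ)ᵗ J₁ = V^{−λ}, where J₁ is the antidiagonal matrix with entries (1, 1, 1, 1). Equivalently, writing τ₁(X) = −J₁ Xᵗ J₁ for the involution of sl₄ associated to the symmetric space SL₄(ℝ)/SO(2,2), the λ-independent part of U^λ, V^λ lies in the (+1)-eigenspace 𝔨₁ of τ₁ and the λ^{∓1} parts lie in the (−1)-eigenspace 𝔭₁. -/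
open Matrix

noncomputable section

/-- The involution `τ₁(X) = −J₁ Xᵗ J₁` of `sl₄` associated to `SL₄ℝ/SO(2,2)`. -/
def τ₁ (X : Matrix (Fin 4) (Fin 4) ℝ) : Matrix (Fin 4) (Fin 4) ℝ := -(J₁ * Xᵀ * J₁)

/-- `U^λ` of the loop-parameter family of the first-order Gauss map (pointwise data,
with `u = c_x/(2c)`). -/
def Uloop (b P Q k u : ℝ) (lam : ℝ) : Matrix (Fin 4) (Fin 4) ℝ :=
  !![u, lam⁻¹ * P, lam⁻¹ * k, lam⁻¹ * (b * Q);
     lam⁻¹, -u, 0, lam⁻¹ * k;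
     0, lam⁻¹ * b, u, lam⁻¹ * P;
     0, 0, lam⁻¹, -u]

/-- `V^λ` of the loop-parameter family of the first-order Gauss map (pointwise data,
with `v = b_y/(2b)`). -/
def Vloop (c P Q ℓ v : ℝ) (lam : ℝ) : Matrix (Fin 4) (Fin 4) ℝ :=
  !![v, lam * ℓ, lam * Q, lam * (c * P);
     0, v, lam * c, lam * Q;
     lam, 0, -v, lam * ℓ;
     0, lam, 0, -v]

set_option maxHeartbeats 2000000 in
/-- Twisting conditions: `τ₁(U^λ) = U^{−λ}` and `τ₁(V^λ) = V^{−λ}` for all `λ ≠ 0`;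
equivalently, the `λ`-independent parts `U₀, V₀` lie in the `(+1)`-eigenspace `𝔨₁` of
`τ₁` and the coefficients `U₋₁, V₁` of `λ∓¹` lie in the `(−1)`-eigenspace `𝔭₁`. -/
theorem loop_twisting_tau1 (b c k ℓ P Q u v : ℝ) :
    (∀ lam : ℝ, lam ≠ 0 →
        τ₁ (Uloop b P Q k u lam) = Uloop b P Q k u (-lam) ∧
        τ₁ (Vloop c P Q ℓ v lam) = Vloop c P Q ℓ v (-lam)) ∧
    (τ₁ (Matrix.diagonal ![u, -u, u, -u]) = Matrix.diagonal ![u, -u, u, -u] ∧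
     τ₁ (Matrix.diagonal ![v, v, -v, -v]) = Matrix.diagonal ![v, v, -v, -v] ∧
     τ₁ !![0, P, k, b * Q; 1, 0, 0, k; 0, b, 0, P; 0, 0, 1, 0]
       = -(!![0, P, k, b * Q; 1, 0, 0, k; 0, b, 0, P; 0, 0, 1, 0]) ∧
     τ₁ !![0, ℓ, Q, c * P; 0, 0, c, Q; 1, 0, 0, ℓ; 0, 1, 0, 0]
       = -(!![0, ℓ, Q, c * P; 0, 0, c, Q; 1, 0, 0, ℓ; 0, 1, 0, 0])) := by
  have tau_apply : ∀ (X : Matrix (Fin 4) (Fin 4) ℝ) (i j : Fin 4),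
      τ₁ X i j = -(X (![3,2,1,0] j) (![3,2,1,0] i)) := by
    intro X i j
    fin_cases i <;> fin_cases j <;>
      simp [τ₁, J₁, Matrix.mul_apply, Matrix.vecMul, dotProduct,
        Matrix.transpose_apply, Fin.sum_univ_four, Matrix.vecHead, Matrix.vecTail]
  have hd1 : Matrix.diagonal ![u, -u, u, -u] = !![u,0,0,0; 0,-u,0,0; 0,0,u,0; 0,0,0,-u] := by
    ext i j; fin_cases i <;> fin_cases j <;>
      simp [Matrix.diagonal_apply, Matrix.vecHead, Matrix.vecTail]
  have hd2 : Matrix.diagonal ![v, v, -v, -v] = !![v,0,0,0; 0,v,0,0; 0,0,-v,0; 0,0,0,-v] := by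
    ext i j; fin_cases i <;> fin_cases j <;>
      simp [Matrix.diagonal_apply, Matrix.vecHead, Matrix.vecTail]
  rw [hd1, hd2]
  refine ⟨fun lam hlam => ⟨?_, ?_⟩, ?_, ?_, ?_, ?_⟩ <;>
  · ext i j
    fin_cases i <;> fin_cases j <;>
      simp [tau_apply, Uloop, Vloop, Matrix.vecHead, Matrix.vecTail] <;> ring
end
end

section
/- Let F : ℝ² → GL₄(ℝ) be smooth and satisfy F_x = F·U and F_y = F·V, where U, V are the Wilczynski coefficient matrices, and define the conformal Gauss map g₂ = F J₂ Fᵗ with J₂ the antidiagonal matrix with entries (1, −1, −1, 1) (reading from the (1,4) entry down to the (4,1) entry). Then ∂_x g₂ = 2 F·diag(bQ, 0, −b, 0)·Fᵗ and ∂_y g₂ = 2 F·diag(cP, −c, 0, 0)·Fᵗ. -/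
set_option maxHeartbeats 1000000


open Matrix

noncomputable section

/-- The antidiagonal matrix `J₂` with entries `(1, −1, −1, 1)` read from the `(1,4)`
entry down to the `(4,1)` entry. -/
def J₂ : Matrix (Fin 4) (Fin 4) ℝ := !![0,0,0,1; 0,0,-1,0; 0,-1,0,0; 1,0,0,0]

/-- For a smooth frame `F : ℝ² → GL₄ℝ` with `F_x = F·U`, `F_y = F·V`, the conformal
Gauss map `g₂ = F J₂ Fᵗ` satisfies `∂_x g₂ = 2 F diag(bQ, 0, −b, 0) Fᵗ` and
`∂_y g₂ = 2 F diag(cP, −c, 0, 0) Fᵗ`. -/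
theorem conformalGaussMap_derivatives
    (b c p q : ℝ × ℝ → ℝ)
    (hb : ContDiff ℝ (⊤ : ℕ∞) b) (hc : ContDiff ℝ (⊤ : ℕ∞) c)
    (hp : ContDiff ℝ (⊤ : ℕ∞) p) (hq : ContDiff ℝ (⊤ : ℕ∞) q)
    (hb0 : ∀ z, b z ≠ 0) (hc0 : ∀ z, c z ≠ 0)
    (F : ℝ × ℝ → Matrix (Fin 4) (Fin 4) ℝ)
    (hFsm : ∀ i j, ContDiff ℝ (⊤ : ℕ∞) fun z => F z i j)
    (hFgl : ∀ z, IsUnit (F z).det)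
    (hFx : ∀ z, pdxM F z = F z * Umat b c p q z)
    (hFy : ∀ z, pdyM F z = F z * Vmat b c p q z)
    (g₂ : ℝ × ℝ → Matrix (Fin 4) (Fin 4) ℝ)
    (hg₂ : g₂ = fun z => F z * J₂ * (F z)ᵀ) :
    ∀ z, pdxM g₂ z = (2 : ℝ) •
          (F z * Matrix.diagonal ![b z * QF b c q z, 0, -(b z), 0] * (F z)ᵀ) ∧
        pdyM g₂ z = (2 : ℝ) •
          (F z * Matrix.diagonal ![c z * PF b c p z, -(c z), 0, 0] * (F z)ᵀ) := by
  rintro ⟨x, y⟩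
  -- derivatives of the entries of F
  have hdx : ∀ i j, HasDerivAt (fun t => F (t, y) i j) (pdxM F (x, y) i j) x := by
    intro i j
    have hdiff : Differentiable ℝ (fun t : ℝ => F (t, y) i j) :=
      ((hFsm i j).differentiable (by simp)).comp
        (differentiable_id.prodMk (differentiable_const _))
    exact (hdiff x).hasDerivAt
  have hdy : ∀ i j, HasDerivAt (fun t => F (x, t) i j) (pdyM F (x, y) i j) y := by
    intro i j
    have hdiff : Differentiable ℝ (fun t : ℝ => F (x, t) i j) :=
      ((hFsm i j).differentiable (by simp)).comp
        ((differentiable_const _).prodMk differentiable_id)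
    exact (hdiff y).hasDerivAt
  -- product rule, x-direction
  have keyx : pdxM g₂ (x, y) =
      pdxM F (x, y) * J₂ * (F (x, y))ᵀ + F (x, y) * J₂ * (pdxM F (x, y))ᵀ := by
    ext i j
    have h1 : HasDerivAt (fun t => (F (t, y) * J₂ * (F (t, y))ᵀ) i j)
        (∑ k, ((∑ l, pdxM F (x, y) i l * J₂ l k) * F (x, y) j k +
           (∑ l, F (x, y) i l * J₂ l k) * pdxM F (x, y) j k)) x := by
      simp only [Matrix.mul_apply, Matrix.transpose_apply]
      exact HasDerivAt.fun_sum fun k _ =>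
        (HasDerivAt.fun_sum fun l _ => (hdx i l).mul_const (J₂ l k)).mul (hdx j k)
    have h2 : pdxM g₂ (x, y) i j =
        deriv (fun t => (F (t, y) * J₂ * (F (t, y))ᵀ) i j) x := by
      simp [pdxM, pdx, hg₂]
    rw [h2, h1.deriv]
    simp [Matrix.mul_apply, Matrix.transpose_apply, Finset.sum_add_distrib]
  -- product rule, y-direction
  have keyy : pdyM g₂ (x, y) =
      pdyM F (x, y) * J₂ * (F (x, y))ᵀ + F (x, y) * J₂ * (pdyM F (x, y))ᵀ := by
    ext i j
    have h1 : HasDerivAt (fun t => (F (x, t) * J₂ * (F (x, t))ᵀ) i j)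
        (∑ k, ((∑ l, pdyM F (x, y) i l * J₂ l k) * F (x, y) j k +
           (∑ l, F (x, y) i l * J₂ l k) * pdyM F (x, y) j k)) y := by
      simp only [Matrix.mul_apply, Matrix.transpose_apply]
      exact HasDerivAt.fun_sum fun k _ =>
        (HasDerivAt.fun_sum fun l _ => (hdy i l).mul_const (J₂ l k)).mul (hdy j k)
    have h2 : pdyM g₂ (x, y) i j =
        deriv (fun t => (F (x, t) * J₂ * (F (x, t))ᵀ) i j) y := by
      simp [pdyM, pdy, hg₂]
    rw [h2, h1.deriv]
    simp [Matrix.mul_apply, Matrix.transpose_apply, Finset.sum_add_distrib]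
  -- algebraic identities for the Wilczynski matrices
  have hU : Umat b c p q (x, y) * J₂ + J₂ * (Umat b c p q (x, y))ᵀ =
      (2 : ℝ) • Matrix.diagonal ![b (x, y) * QF b c q (x, y), 0, -(b (x, y)), 0] := by
    have hUt : (Umat b c p q (x, y))ᵀ =
        !![pdx c (x, y) / (2 * c (x, y)), 1, 0, 0;
           PF b c p (x, y), -(pdx c (x, y) / (2 * c (x, y))), b (x, y), 0;
           kF b c (x, y), 0, pdx c (x, y) / (2 * c (x, y)), 1;
           b (x, y) * QF b c q (x, y), kF b c (x, y), PF b c p (x, y),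
             -(pdx c (x, y) / (2 * c (x, y)))] := by
      ext i j; fin_cases i <;> fin_cases j <;> rfl
    rw [hUt]
    ext i j
    fin_cases i <;> fin_cases j <;>
      simp [Umat, J₂, Matrix.mul_apply, Fin.sum_univ_four, Matrix.diagonal_apply] <;>
        first | rfl | ring
  have hV : Vmat b c p q (x, y) * J₂ + J₂ * (Vmat b c p q (x, y))ᵀ =
      (2 : ℝ) • Matrix.diagonal ![c (x, y) * PF b c p (x, y), -(c (x, y)), 0, 0] := by
    have hVt : (Vmat b c p q (x, y))ᵀ =
        !![pdy b (x, y) / (2 * b (x, y)), 0, 1, 0;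
           lF b c (x, y), pdy b (x, y) / (2 * b (x, y)), 0, 1;
           QF b c q (x, y), c (x, y), -(pdy b (x, y) / (2 * b (x, y))), 0;
           c (x, y) * PF b c p (x, y), QF b c q (x, y), lF b c (x, y),
             -(pdy b (x, y) / (2 * b (x, y)))] := by
      ext i j; fin_cases i <;> fin_cases j <;> rfl
    rw [hVt]
    ext i j
    fin_cases i <;> fin_cases j <;>
      simp [Vmat, J₂, Matrix.mul_apply, Fin.sum_univ_four, Matrix.diagonal_apply] <;>
        first | rfl | ring
  constructor
  · rw [keyx, hFx (x, y), Matrix.transpose_mul]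
    calc F (x, y) * Umat b c p q (x, y) * J₂ * (F (x, y))ᵀ +
          F (x, y) * J₂ * ((Umat b c p q (x, y))ᵀ * (F (x, y))ᵀ)
        = F (x, y) * ((Umat b c p q (x, y) * J₂ + J₂ * (Umat b c p q (x, y))ᵀ) *
            (F (x, y))ᵀ) := by
          simp only [Matrix.mul_assoc, Matrix.add_mul, Matrix.mul_add]
      _ = (2 : ℝ) • (F (x, y) *
            Matrix.diagonal ![b (x, y) * QF b c q (x, y), 0, -(b (x, y)), 0] *
            (F (x, y))ᵀ) := by
          rw [hU, Matrix.smul_mul, Matrix.mul_smul, Matrix.mul_assoc]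
  · rw [keyy, hFy (x, y), Matrix.transpose_mul]
    calc F (x, y) * Vmat b c p q (x, y) * J₂ * (F (x, y))ᵀ +
          F (x, y) * J₂ * ((Vmat b c p q (x, y))ᵀ * (F (x, y))ᵀ)
        = F (x, y) * ((Vmat b c p q (x, y) * J₂ + J₂ * (Vmat b c p q (x, y))ᵀ) *
            (F (x, y))ᵀ) := by
          simp only [Matrix.mul_assoc, Matrix.add_mul, Matrix.mul_add]
      _ = (2 : ℝ) • (F (x, y) *
            Matrix.diagonal ![c (x, y) * PF b c p (x, y), -(c (x, y)), 0, 0] *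
            (F (x, y))ᵀ) := by
          rw [hV, Matrix.smul_mul, Matrix.mul_smul, Matrix.mul_assoc]
end
end

section
/- For every λ ∈ ℝ with λ ≠ 0, the matrices Û^λ, V̂^λ of the loop-parameter family associated to the conformal Gauss map satisfy the twisting conditions −J₂ (Û^λ)ᵗ J₂ = Û^{−λ} and −J₂ (V̂^λ)ᵗ J₂ = V̂^{−λ}, where J₂ is the antidiagonal matrix with entries (1, −1, −1, 1) (reading from the (1,4) entry down to the (4,1) entry). Equivalently, writing τ₂(X) = −J₂ Xᵗ J₂, the λ-independent part of Û^λ, V̂^λ lies in the (+1)-eigenspace 𝔨₂ of τ₂ and the λ^{∓1} parts lie in the (−1)-eigenspace 𝔭₂; thus the extended Wilczynski frame of a projective minimal surface takes values in the twisted loop group Λ SL₄ℝ_{τ₂}. -/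
open Matrix

noncomputable section

/-- The involution `τ₂(X) = −J₂ Xᵗ J₂`. -/
def τ₂ (X : Matrix (Fin 4) (Fin 4) ℝ) : Matrix (Fin 4) (Fin 4) ℝ := -(J₂ * Xᵀ * J₂)

/-- `Û^λ` of the loop-parameter family of the conformal Gauss map (pointwise data,
with `u = c_x/(2c)`). -/
def UhatLoop (b P Q k u : ℝ) (lam : ℝ) : Matrix (Fin 4) (Fin 4) ℝ :=
  !![u, P, k, lam⁻¹ * (b * Q);
     1, -u, 0, k;
     0, lam⁻¹ * b, u, P;
     0, 0, 1, -u]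

/-- `V̂^λ` of the loop-parameter family of the conformal Gauss map (pointwise data,
with `v = b_y/(2b)`). -/
def VhatLoop (c P Q ℓ v : ℝ) (lam : ℝ) : Matrix (Fin 4) (Fin 4) ℝ :=
  !![v, ℓ, Q, lam * (c * P);
     0, v, lam * c, Q;
     1, 0, -v, ℓ;
     0, 1, 0, -v]

lemma tr4 (a b c d e f g h i j k l m n o p : ℝ) :
    (!![a,b,c,d; e,f,g,h; i,j,k,l; m,n,o,p])ᵀ = !![a,e,i,m; b,f,j,n; c,g,k,o; d,h,l,p] := by
  ext x y; fin_cases x <;> fin_cases y <;> rfl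

lemma tau2_eq (a b c d e f g h i j k l m n o p : ℝ) :
    τ₂ !![a,b,c,d; e,f,g,h; i,j,k,l; m,n,o,p]
      = !![-p, l, h, -d; o, -k, -g, c; n, -j, -f, b; -m, i, e, -a] := by
  rw [τ₂, tr4]
  ext x y
  fin_cases x <;> fin_cases y <;>
    simp [J₂, Matrix.mul_apply, Fin.sum_univ_four]

/-- Twisting conditions: `τ₂(Û^λ) = Û^{−λ}` and `τ₂(V̂^λ) = V̂^{−λ}` for all `λ ≠ 0`;
equivalently, the `λ`-independent parts lie in the `(+1)`-eigenspace `𝔨₂` of `τ₂` and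
the coefficients of `λ∓¹` lie in the `(−1)`-eigenspace `𝔭₂`; thus the extended
Wilczynski frame of a projective minimal surface takes values in the twisted loop
group `Λ SL₄ℝ_{τ₂}`. -/
theorem loop_twisting_tau2 (b c k ℓ P Q u v : ℝ) :
    (∀ lam : ℝ, lam ≠ 0 →
        τ₂ (UhatLoop b P Q k u lam) = UhatLoop b P Q k u (-lam) ∧
        τ₂ (VhatLoop c P Q ℓ v lam) = VhatLoop c P Q ℓ v (-lam)) ∧
    (τ₂ !![u, P, k, 0; 1, -u, 0, k; 0, 0, u, P; 0, 0, 1, -u]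
        = !![u, P, k, 0; 1, -u, 0, k; 0, 0, u, P; 0, 0, 1, -u] ∧
     τ₂ !![v, ℓ, Q, 0; 0, v, 0, Q; 1, 0, -v, ℓ; 0, 1, 0, -v]
        = !![v, ℓ, Q, 0; 0, v, 0, Q; 1, 0, -v, ℓ; 0, 1, 0, -v] ∧
     τ₂ !![0, 0, 0, b * Q; 0, 0, 0, 0; 0, b, 0, 0; 0, 0, 0, 0]
        = -(!![0, 0, 0, b * Q; 0, 0, 0, 0; 0, b, 0, 0; 0, 0, 0, 0]) ∧
     τ₂ !![0, 0, 0, c * P; 0, 0, c, 0; 0, 0, 0, 0; 0, 0, 0, 0]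
        = -(!![0, 0, 0, c * P; 0, 0, c, 0; 0, 0, 0, 0; 0, 0, 0, 0])) := by
  refine ⟨fun lam hlam => ⟨?_, ?_⟩, ?_, ?_, ?_, ?_⟩
  · rw [UhatLoop, tau2_eq, UhatLoop]
    ext x y; fin_cases x <;> fin_cases y <;> simp [← neg_inv] <;> ring
  · rw [VhatLoop, tau2_eq, VhatLoop]
    ext x y; fin_cases x <;> fin_cases y <;> simp <;> ring
  · rw [tau2_eq]; norm_num
  · rw [tau2_eq]; norm_num
  · rw [tau2_eq]
    ext x y; fin_cases x <;> fin_cases y <;> simp [Matrix.vecHead, Matrix.vecTail]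
  · rw [tau2_eq]
    ext x y; fin_cases x <;> fin_cases y <;> simp [Matrix.vecHead, Matrix.vecTail]
end
end
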